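/- arXiv:1203.2754 — 6 statements merged into one kernel-verified Lean document; each statement's English description precedes it below -/
import Mathlib

section
/- Let K be a field of characteristic 0 and let X be the generic strictly upper triangular 2×2 block structure: explicitly, for the parabolic subalgebra of gl(8,K) with block sizes (2,4,2), consider the polynomial ring A = K[x_{ij}] in variables x_{ij} for (i,j) in the nilradical positions (i.e., 1≤i≤2 < j≤8, or 3≤i≤6 < 7≤j≤8). Define M1 = x_{23}, M2 = x_{13}x_{24} − x_{14}x_{23}, N1 = x_{67}, N2 = x_{57}x_{68} − x_{58}x_{67}, L11 = x_{23}x_{37} + x_{24}x_{47} + x_{25}x_{57} + x_{26}x_{67}, L12 = (x_{13}x_{24} − x_{14}x_{23})x_{47} + (x_{13}x_{25} − x_{15}x_{23})x_{57} + (x_{13}x_{26} − x_{16}x_{23})x_{67}, L21 = x_{23}(x_{37}x_{68} − x_{38}x_{67}) + x_{24}(x_{47}x_{68} − x_{48}x_{67}) + x_{25}(x_{57}x_{68} − x_{58}x_{67}), L22 = (x_{13}x_{24} − x_{14}x_{23})(x_{47}x_{68} − x_{48}x_{67}) + (x_{13}x_{25} − x_{15}x_{23})(x_{57}x_{68} −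 x_{58}x_{67}), and D = the minor of the matrix X² with rows {1,2} and columns {7,8}, where X is the 8×8 matrix with entries x_{ij} in the nilradical positions and 0 elsewhere. Then the identity L12·L21 − L11·L22 = M1·N1·D holds in A. -/
/-
Write `Q` for the block of `X²` on rows {1,2} and columns {7,8}, so that `D = det Q`. The
four polynomials are the entries of a product of `Q` with two triangular matrices:
`!![L12, L22; L11, L21] = !![-x₂₃, x₁₃; 0, 1] * Q * !![1, x₆₈; 0, -x₆₇]`,
so `L12·L21 − L11·L22` is its determinant `(-x₂₃) · D · (-x₆₇)`.

Variables are indexed 0-based: `x_{ij}` (1-based) is `X (i-1, j-1)`.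
-/

noncomputable section

open MvPolynomial

variable (K : Type*) [Field K] [CharZero K]

/-- nilradical positions of the (2,4,2) parabolic (0-based). -/
def NilPos242 (i j : Fin 8) : Prop :=
  (i.val < 2 ∧ 2 ≤ j.val) ∨ (2 ≤ i.val ∧ i.val < 6 ∧ 6 ≤ j.val)

instance (i j : Fin 8) : Decidable (NilPos242 i j) := by
  unfold NilPos242; infer_instance

abbrev A8 := MvPolynomial (Fin 8 × Fin 8) K

def pM1 : A8 K := X (1,2)
def pM2 : A8 K := X (0,2) * X (1,3) - X (0,3) * X (1,2)
def pN1 : A8 K := X (5,6)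
def pN2 : A8 K := X (4,6) * X (5,7) - X (4,7) * X (5,6)
def pL11 : A8 K :=
  X (1,2) * X (2,6) + X (1,3) * X (3,6) + X (1,4) * X (4,6) + X (1,5) * X (5,6)
def pL12 : A8 K :=
  (X (0,2) * X (1,3) - X (0,3) * X (1,2)) * X (3,6) +
  (X (0,2) * X (1,4) - X (0,4) * X (1,2)) * X (4,6) +
  (X (0,2) * X (1,5) - X (0,5) * X (1,2)) * X (5,6)
def pL21 : A8 K :=
  X (1,2) * (X (2,6) * X (5,7) - X (2,7) * X (5,6)) +
  X (1,3) * (X (3,6) * X (5,7) - X (3,7) * X (5,6)) +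
  X (1,4) * (X (4,6) * X (5,7) - X (4,7) * X (5,6))
def pL22 : A8 K :=
  (X (0,2) * X (1,3) - X (0,3) * X (1,2)) * (X (3,6) * X (5,7) - X (3,7) * X (5,6)) +
  (X (0,2) * X (1,4) - X (0,4) * X (1,2)) * (X (4,6) * X (5,7) - X (4,7) * X (5,6))

/-- the generic nilradical matrix: `x_{ij}` at nilradical positions, `0` elsewhere. -/
def Xgen : Matrix (Fin 8) (Fin 8) (A8 K) :=
  fun i j => if NilPos242 i j then X (i, j) else 0

/-- `D` = minor of `X²` on rows {1,2}, columns {7,8} (1-based). -/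
def pD : A8 K :=
  (Xgen K * Xgen K) 0 6 * (Xgen K * Xgen K) 1 7 -
  (Xgen K * Xgen K) 0 7 * (Xgen K * Xgen K) 1 6


theorem det_triangular_sandwich_fin_two {R : Type*} [CommRing R] (a b u v p q r s : R) :
    (u * r - a * p) * (v * r - b * s) - r * (u * (v * r - b * s) - a * (v * p - b * q))
      = a * b * (p * s - q * r) :=
  calc _ = (!![-a, u; 0, 1] * !![p, q; r, s] * !![1, v; 0, -b]).det := by
          simp only [Matrix.mul_fin_two, Matrix.det_fin_two_of]; ring
    _ = -a * (p * s - q * r) * -b := by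
          simp only [Matrix.det_mul, Matrix.det_fin_two_of]; ring
    _ = a * b * (p * s - q * r) := by ring

end

open MvPolynomial

section

variable (K : Type*) [Field K]

theorem Xgen_mul_self_apply_of_lt_of_le {i j : Fin 8} (hi : i.val < 2) (hj : 6 ≤ j.val) :
    (Xgen K * Xgen K) i j =
      X (i,2) * X (2,j) + X (i,3) * X (3,j) + X (i,4) * X (4,j) + X (i,5) * X (5,j) := by
  have hi' : ¬ 2 ≤ i.val := by omega
  have hj' : 2 ≤ j.val := by omega
  simp [Matrix.mul_apply, Fin.sum_univ_eight, Xgen, NilPos242, hi, hj, hi', hj']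

theorem pL11_eq : pL11 K = (Xgen K * Xgen K) 1 6 := by
  rw [Xgen_mul_self_apply_of_lt_of_le K (by decide) (by decide)]
  rfl

-- Expanding `X²` produces one term more than `pL_` has; it carries a 2×2 minor with equal columns.
theorem pL12_eq :
    pL12 K = X (0,2) * (Xgen K * Xgen K) 1 6 - X (1,2) * (Xgen K * Xgen K) 0 6 := by
  rw [pL12]
  simp (disch := decide) only [Xgen_mul_self_apply_of_lt_of_le K]
  ring

theorem pL21_eq :
    pL21 K = X (5,7) * (Xgen K * Xgen K) 1 6 - X (5,6) * (Xgen K * Xgen K) 1 7 := by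
  rw [pL21]
  simp (disch := decide) only [Xgen_mul_self_apply_of_lt_of_le K]
  ring

theorem pL22_eq :
    pL22 K =
      X (0,2) * (X (5,7) * (Xgen K * Xgen K) 1 6 - X (5,6) * (Xgen K * Xgen K) 1 7)
        - X (1,2) * (X (5,7) * (Xgen K * Xgen K) 0 6 - X (5,6) * (Xgen K * Xgen K) 0 7) := by
  rw [pL22]
  simp (disch := decide) only [Xgen_mul_self_apply_of_lt_of_le K]
  ring

variable [CharZero K]

theorem L_identity :
    pL12 K * pL21 K - pL11 K * pL22 K = pM1 K * pN1 K * pD K := by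
  rw [pL11_eq, pL12_eq, pL21_eq, pL22_eq, pD, pM1, pN1]
  exact det_triangular_sandwich_fin_two (X (1,2)) (X (5,6)) (X (0,2)) (X (5,7)) _ _ _ _

end
end

section
/- With the notation of the (2,4,2) parabolic case, the polynomial D (the 2×2 minor of X² on rows {1,2} and columns {7,8}) does not lie in the K-subalgebra B0 of A generated by M1, M2, N1, N2, L11, L12, L21, L22. -/
/- Statement 0: the identity L12·L21 − L11·L22 = M1·N1·D in the coordinate ring of the
(2,4,2) nilradical of gl(8,K).  Variables are indexed 0-based: x_{ij} (1-based) is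
`X (i-1, j-1)`.  The ambient polynomial ring contains all pairs, but only nilradical
variables occur in the polynomials and in the generic matrix `Xgen`. -/

noncomputable section

open MvPolynomial

variable (K : Type*) [Field K] [CharZero K]

/-- evaluation point: x₀₄ ↦ t, x₄₆, x₁₃, x₃₇ ↦ 1, everything else ↦ 0. -/
def gval : Fin 8 × Fin 8 → Polynomial K := fun p =>
  if p = (0,4) then Polynomial.X
  else if p = (4,6) ∨ p = (1,3) ∨ p = (3,7) then 1 else 0

lemma gval_M1 : aeval (gval K) (pM1 K) = 0 := by
  simp [pM1, gval]
lemma gval_M2 : aeval (gval K) (pM2 K) = 0 := by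
  simp [pM2, gval]
lemma gval_N1 : aeval (gval K) (pN1 K) = 0 := by
  simp [pN1, gval]
lemma gval_N2 : aeval (gval K) (pN2 K) = 0 := by
  simp [pN2, gval]
lemma gval_L11 : aeval (gval K) (pL11 K) = 0 := by
  simp [pL11, gval]
lemma gval_L12 : aeval (gval K) (pL12 K) = 0 := by
  simp [pL12, gval]
lemma gval_L21 : aeval (gval K) (pL21 K) = 0 := by
  simp [pL21, gval]
lemma gval_L22 : aeval (gval K) (pL22 K) = 0 := by
  simp [pL22, gval]

lemma gval_D : aeval (gval K) (pD K) = Polynomial.X := by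
  simp (config := { decide := true }) [pD, Xgen, Matrix.mul_apply, Fin.sum_univ_eight,
    NilPos242, gval]

/-- D does not lie in the subalgebra generated by
M1, M2, N1, N2, L11, L12, L21, L22. -/
theorem D_not_in_B0 :
    pD K ∉ Algebra.adjoin K
      ({pM1 K, pM2 K, pN1 K, pN2 K, pL11 K, pL12 K, pL21 K, pL22 K} :
        Set (A8 K)) := by
  intro h
  set S : Set (A8 K) :=
    {pM1 K, pM2 K, pN1 K, pN2 K, pL11 K, pL12 K, pL21 K, pL22 K} with hS
  have hmem : aeval (gval K) (pD K) ∈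
      Algebra.adjoin K ((aeval (gval K) : A8 K →ₐ[K] Polynomial K) '' S) := by
    rw [← AlgHom.map_adjoin]
    exact Subalgebra.mem_map.mpr ⟨_, h, rfl⟩
  have hle : Algebra.adjoin K ((aeval (gval K) : A8 K →ₐ[K] Polynomial K) '' S) ≤ ⊥ := by
    apply Algebra.adjoin_le
    rintro _ ⟨x, hx, rfl⟩
    simp only [hS, Set.mem_insert_iff, Set.mem_singleton_iff] at hx
    rcases hx with rfl | rfl | rfl | rfl | rfl | rfl | rfl | rfl <;>
      simp [gval_M1, gval_M2, gval_N1, gval_N2, gval_L11, gval_L12, gval_L21, gval_L22]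
  have hX : Polynomial.X ∈ (⊥ : Subalgebra K (Polynomial K)) := by
    rw [← gval_D]; exact hle hmem
  rw [Algebra.mem_bot] at hX
  obtain ⟨c, hc⟩ := hX
  rw [Polynomial.algebraMap_eq] at hc
  exact Polynomial.X_ne_C c hc.symm

end
end

section
/- With the notation of the (2,4,2) parabolic case, the eight polynomials M1, M2, N1, N2, L11, L12, L21, L22 are algebraically independent over K. -/
/- Statement 0: the identity L12·L21 − L11·L22 = M1·N1·D in the coordinate ring of the
(2,4,2) nilradical of gl(8,K).  Variables are indexed 0-based: x_{ij} (1-based) is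
`X (i-1, j-1)`.  The ambient polynomial ring contains all pairs, but only nilradical
variables occur in the polynomials and in the generic matrix `Xgen`. -/

noncomputable section

open MvPolynomial

variable (K : Type*) [Field K] [CharZero K]

/-! The eight generators are specialized to rational functions in eight indeterminates `u i`
so that they become exactly `u 0, …, u 7`; an algebraic relation among the generators would
then be one among the indeterminates. -/

theorem MvPolynomial.algebraicIndependent_algebraMap_X_fractionRing (σ R : Type*) [CommRing R]
    [IsDomain R] :
    AlgebraicIndependent R
      fun i : σ ↦ algebraMap (MvPolynomial σ R) (FractionRing (MvPolynomial σ R)) (X i) :=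
  (algebraicIndependent_X σ R).map' (f := IsScalarTower.toAlgHom R _ _)
    (IsFractionRing.injective _ _)

/-- With `x₁₃ = x₅₇ = 1` (0-based) the generators `M₁, M₂, N₁, N₂, L₁₁` only see
`x₁₂, x₀₂, x₅₆, x₄₆, x₃₆`, and `L₂₂, L₁₂, L₂₁` are affine in `x₀₄, x₀₅, x₂₇` respectively,
which are solved for. -/
def generatorPreimage {L : Type*} [Field L] (u : Fin 8 → L) : Fin 8 × Fin 8 → L :=
  fun p ↦ (!![0, 0, u 1, 0, (u 1 * u 4 - u 7) / (u 0 * u 3), (u 7 - u 5) / (u 0 * u 2), 0, 0;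
              0, 0, u 0, 1, 0, 0, 0, 0;
              0, 0, 0, 0, 0, 0, 0, (u 4 - u 6) / (u 0 * u 2);
              0, 0, 0, 0, 0, 0, u 4, 0;
              0, 0, 0, 0, 0, 0, u 3, 0;
              0, 0, 0, 0, 0, 0, u 2, 1;
              0, 0, 0, 0, 0, 0, 0, 0;
              0, 0, 0, 0, 0, 0, 0, 0] : Matrix (Fin 8) (Fin 8) L) p.1 p.2

theorem aeval_generatorPreimage (K : Type*) {L : Type*} [Field K] [Field L] [Algebra K L]
    (u : Fin 8 → L) (h0 : u 0 ≠ 0) (h2 : u 2 ≠ 0) (h3 : u 3 ≠ 0) :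
    aeval (generatorPreimage u) ∘
      ![pM1 K, pM2 K, pN1 K, pN2 K, pL11 K, pL12 K, pL21 K, pL22 K] = u := by
  funext i
  fin_cases i <;>
    simp only [pM1, pM2, pN1, pN2, pL11, pL12, pL21, pL22, Function.comp_apply, map_add, map_sub,
      map_mul, aeval_X, generatorPreimage, Matrix.of_apply, Matrix.cons_val', Matrix.cons_val,
      Matrix.cons_val_zero, Matrix.cons_val_one, Matrix.cons_val_fin_one, Fin.reduceFinMk,
      Fin.zero_eta, Fin.mk_one, Fin.isValue] <;>
    field_simp <;> ring

/-- the eight polynomials M1, M2, N1, N2, L11, L12, L21, L22 are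
algebraically independent over K. -/
theorem generators_algebraically_independent :
    AlgebraicIndependent K
      ![pM1 K, pM2 K, pN1 K, pN2 K, pL11 K, pL12 K, pL21 K, pL22 K] := by
  let u := fun i : Fin 8 ↦
    algebraMap (MvPolynomial (Fin 8) K) (FractionRing (MvPolynomial (Fin 8) K)) (X i)
  have hu (i : Fin 8) : u i ≠ 0 :=
    IsFractionRing.to_map_ne_zero_of_mem_nonZeroDivisors
      (mem_nonZeroDivisors_of_ne_zero (X_ne_zero i))
  apply AlgebraicIndependent.of_comp (aeval (generatorPreimage u))
  rw [aeval_generatorPreimage K u (hu 0) (hu 2) (hu 3)]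
  exact algebraicIndependent_algebraMap_X_fractionRing (Fin 8) K

end
end

section
/- Let p be a polynomial in 9 variables u1,u2,v1,v2,w11,w12,w21,w22,z over a field K of characteristic 0 such that p(0, −a1a2, b1, −b1b2, a2c21, −a2b1c22, −a1a2c21, a1a2b1c22, a1a2(c11c22−c12c21)) = 0 for all a1,a2,b1,b2,c11,c12,c21,c22 ∈ K (K infinite). Then p lies in the ideal of K[u1,...,z] generated by u1 and (w12·w21 − w11·w22). -/
/-!
Substituting `u1 = 0` reduces `p` modulo `u1` to a polynomial `p₀` in the other variables.
Pseudo-dividing `p₀` by `δ = w12 w21 - w11 w22`, which is linear in `w22` with coefficient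
`-w11`, gives `w11 ^ d * p₀ = g * δ + r` with `r` free of `u1` and `w22`. Every point with
`u2 v1 w11 w21 ≠ 0` agrees with a point of the family away from `u1` and `w22`, and there both
`p₀` and `δ` vanish; hence `r` vanishes off the hypersurface `u2 v1 w11 w21 = 0`, so `r = 0`.
Finally `w11` is prime and does not divide `δ`, so `δ ∣ p₀`.
-/

noncomputable section

open MvPolynomial

namespace MvPolynomial

variable {σ R : Type*} [CommRing R]

theorem sub_aeval_mem_of_forall_X_sub_mem {I : Ideal (MvPolynomial σ R)}
    {g : σ → MvPolynomial σ R} (hg : ∀ j, X j - g j ∈ I) (p : MvPolynomial σ R) :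
    p - aeval g p ∈ I := by
  have hcomp : (Ideal.Quotient.mkₐ R I).comp (aeval g) = Ideal.Quotient.mkₐ R I :=
    algHom_ext fun j => by simpa [Ideal.Quotient.eq] using I.neg_mem_iff.mpr (hg j)
  rw [← Ideal.Quotient.eq, ← Ideal.Quotient.mkₐ_eq_mk R, ← AlgHom.comp_apply (φ₂ := aeval g),
    hcomp]

theorem aeval_update_X_zero_mem_supported [DecidableEq σ] (i : σ) (p : MvPolynomial σ R) :
    aeval (Function.update X i 0) p ∈ supported R {i}ᶜ := by
  have hrange : (aeval (Function.update (X : σ → MvPolynomial σ R) i 0)).range ≤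
      supported R {i}ᶜ := by
    rw [aeval_range, Algebra.adjoin_le_iff]
    rintro _ ⟨j, rfl⟩
    rcases eq_or_ne j i with rfl | hj
    · simp
    · rw [Function.update_of_ne hj]
      exact Algebra.subset_adjoin ⟨j, hj, rfl⟩
  exact hrange ⟨p, rfl⟩

theorem eval_aeval_update_X_zero [DecidableEq σ] {x : σ → R} {i : σ} (hx : x i = 0)
    (p : MvPolynomial σ R) : eval x (aeval (Function.update X i 0) p) = eval x p := by
  have hx' : (fun j => eval x (Function.update X i 0 j)) = x := by
    funext j
    rcases eq_or_ne j i with rfl | hj <;> simp [*]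
  rw [aeval_eq_bind₁, eval, eval₂Hom_bind₁]
  exact congrArg (fun y => eval₂Hom (RingHom.id R) y p) hx'

theorem eval_eq_eval_of_mem_supported {s : Set σ} {r : MvPolynomial σ R}
    (hr : r ∈ supported R s) {x y : σ → R} (hxy : ∀ i ∈ s, x i = y i) :
    eval x r = eval y r :=
  eval₂Hom_congr' rfl (fun i hi _ => hxy i (mem_supported.mp hr hi)) rfl

theorem exists_pow_mul_eq_mul_add_mem_supported {s : Set σ} {j : σ}
    {a b : MvPolynomial σ R} (ha : a ∈ supported R (s \ {j})) (hb : b ∈ supported R (s \ {j}))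
    {p : MvPolynomial σ R} (hp : p ∈ supported R s) :
    ∃ (d : ℕ) (g r : MvPolynomial σ R),
      a ^ d * p = g * (b - a * X j) + r ∧ r ∈ supported R (s \ {j}) := by
  induction hp using Algebra.adjoin_induction with
  | mem q hq =>
    obtain ⟨i, hi, rfl⟩ := hq
    rcases eq_or_ne i j with rfl | hij
    · exact ⟨1, -1, b, by ring, hb⟩
    · exact ⟨0, 0, X i, by ring, Algebra.subset_adjoin ⟨i, ⟨hi, hij⟩, rfl⟩⟩
  | algebraMap c =>
    exact ⟨0, 0, algebraMap R _ c, by ring, Subalgebra.algebraMap_mem _ c⟩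
  | add p q _ _ hp hq =>
    obtain ⟨d, g, r, h, hr⟩ := hp
    obtain ⟨e, g', r', h', hr'⟩ := hq
    refine ⟨d + e, a ^ e * g + a ^ d * g', a ^ e * r + a ^ d * r', ?_,
      add_mem (mul_mem (pow_mem ha e) hr) (mul_mem (pow_mem ha d) hr')⟩
    linear_combination a ^ e * h + a ^ d * h'
  | mul p q _ _ hp hq =>
    obtain ⟨d, g, r, h, hr⟩ := hp
    obtain ⟨e, g', r', h', hr'⟩ := hq
    refine ⟨d + e, g * g' * (b - a * X j) + g * r' + g' * r, r * r', ?_, mul_mem hr hr'⟩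
    linear_combination a ^ e * q * h + (g * (b - a * X j) + r) * h'

theorem eq_zero_of_eval_eq_zero_of_eval_ne_zero [IsDomain R] [Infinite R]
    {h r : MvPolynomial σ R} (hh : h ≠ 0) (hr : ∀ x, eval x h ≠ 0 → eval x r = 0) :
    r = 0 := by
  have hhr : h * r = 0 := funext fun x => by
    by_cases hx : eval x h = 0 <;> simp [hx, hr]
  exact (mul_eq_zero.mp hhr).resolve_left hh

theorem not_X_dvd_X_mul_X_sub_X_mul [IsDomain R] {i j k l : σ} (hij : i ≠ j) (hik : i ≠ k) :
    ¬(X i : MvPolynomial σ R) ∣ X j * X k - X i * X l := by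
  intro h
  have hjk : (X i : MvPolynomial σ R) ∣ X j * X k := by
    simpa using dvd_add h (dvd_mul_right (X i) (X l))
  rcases X_prime.dvd_or_dvd hjk with h | h <;> simp_all [X_dvd_X]

end MvPolynomial

theorem Prime.dvd_of_pow_mul_eq_mul {M : Type*} [CommMonoidWithZero M] [IsCancelMulZero M]
    {x c f g : M} (hx : Prime x) (hxc : ¬x ∣ c) {d : ℕ} (h : x ^ d * f = g * c) : c ∣ f := by
  obtain ⟨g', rfl⟩ := hx.pow_dvd_of_dvd_mul_right d hxc ⟨f, h.symm⟩
  exact ⟨g', mul_left_cancel₀ (pow_ne_zero d hx.ne_zero) (by rw [h, mul_comm c, mul_assoc])⟩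

section Family

/- variables of K[u1,u2,v1,v2,w11,w12,w21,w22,z] indexed by Fin 9 in that order:
0 ↦ u1, 1 ↦ u2, 2 ↦ v1, 3 ↦ v2, 4 ↦ w11, 5 ↦ w12, 6 ↦ w21, 7 ↦ w22, 8 ↦ z. -/
def familyPoint {K : Type*} [CommRing K] (a1 a2 b1 b2 c11 c12 c21 c22 : K) : Fin 9 → K :=
  ![0, -(a1 * a2), b1, -(b1 * b2), a2 * c21, -(a2 * b1 * c22), -(a1 * a2 * c21),
    a1 * a2 * b1 * c22, a1 * a2 * (c11 * c22 - c12 * c21)]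

theorem eval_familyPoint_det {K : Type*} [CommRing K] (a1 a2 b1 b2 c11 c12 c21 c22 : K) :
    eval (familyPoint a1 a2 b1 b2 c11 c12 c21 c22) (X 5 * X 6 - X 4 * X 7) = 0 := by
  simp [familyPoint]
  ring

variable {K : Type*} [Field K]

theorem exists_familyPoint_eq {x : Fin 9 → K} (h1 : x 1 ≠ 0) (h2 : x 2 ≠ 0) (h4 : x 4 ≠ 0)
    (h6 : x 6 ≠ 0) : ∃ a1 a2 b1 b2 c12 c21 c22 : K,
      ∀ i ∈ ({0}ᶜ \ {7} : Set (Fin 9)), familyPoint a1 a2 b1 b2 0 c12 c21 c22 i = x i := by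
  refine ⟨-x 6 / x 4, x 1 * x 4 / x 6, x 2, -x 3 / x 2, x 8 / x 6, x 6 / x 1,
    -(x 5 * x 6) / (x 1 * x 2 * x 4), fun i hi => ?_⟩
  fin_cases i <;> simp_all [familyPoint] <;> field_simp

theorem eq_zero_of_mem_supported_of_eval_familyPoint [Infinite K] {r : MvPolynomial (Fin 9) K}
    (hr : r ∈ supported K ({0}ᶜ \ {7}))
    (hfam : ∀ a1 a2 b1 b2 c12 c21 c22 : K, eval (familyPoint a1 a2 b1 b2 0 c12 c21 c22) r = 0) :
    r = 0 := by
  refine eq_zero_of_eval_eq_zero_of_eval_ne_zero (h := X 1 * X 2 * X 4 * X 6)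
    (by simp [X_ne_zero]) fun x hx => ?_
  simp only [map_mul, eval_X, mul_ne_zero_iff] at hx
  obtain ⟨⟨⟨h1, h2⟩, h4⟩, h6⟩ := hx
  obtain ⟨a1, a2, b1, b2, c12, c21, c22, hy⟩ := exists_familyPoint_eq h1 h2 h4 h6
  rw [eval_eq_eval_of_mem_supported hr fun i hi => (hy i hi).symm]
  exact hfam a1 a2 b1 b2 c12 c21 c22

end Family

theorem vanishing_implies_ideal_membership_general
    {K : Type*} [Field K] [CharZero K]
    (p : MvPolynomial (Fin 9) K)
    (hp : ∀ a1 a2 b1 b2 c11 c12 c21 c22 : K,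
      MvPolynomial.eval
        (![0, -(a1 * a2), b1, -(b1 * b2), a2 * c21, -(a2 * b1 * c22),
           -(a1 * a2 * c21), a1 * a2 * b1 * c22,
           a1 * a2 * (c11 * c22 - c12 * c21)] : Fin 9 → K) p = 0) :
    p ∈ Ideal.span
      ({X 0, X 5 * X 6 - X 4 * X 7} : Set (MvPolynomial (Fin 9) K)) := by
  set I : Ideal (MvPolynomial (Fin 9) K) := Ideal.span {X 0, X 5 * X 6 - X 4 * X 7}
  have hfam : ∀ a1 a2 b1 b2 c11 c12 c21 c22 : K,
      eval (familyPoint a1 a2 b1 b2 c11 c12 c21 c22) p = 0 := hp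
  obtain ⟨d, g, r, hdiv, hr⟩ := exists_pow_mul_eq_mul_add_mem_supported (j := 7) (a := X 4)
    (b := X 5 * X 6) (by simp) (mul_mem (by simp) (by simp))
    (aeval_update_X_zero_mem_supported 0 p)
  have hr₀ : r = 0 := eq_zero_of_mem_supported_of_eval_familyPoint hr
    fun a1 a2 b1 b2 c12 c21 c22 => by
      have h := congrArg (eval (familyPoint a1 a2 b1 b2 0 c12 c21 c22)) hdiv
      rwa [map_mul, map_add, map_mul, eval_familyPoint_det, eval_aeval_update_X_zero (i := 0) rfl,
        hfam a1 a2 b1 b2 0 c12 c21 c22, mul_zero, mul_zero, zero_add, eq_comm] at h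
  rw [hr₀, add_zero] at hdiv
  obtain ⟨q, hq⟩ := X_prime.dvd_of_pow_mul_eq_mul
    (not_X_dvd_X_mul_X_sub_X_mul (by decide) (by decide)) hdiv
  have hsub : p - aeval (Function.update X 0 0) p ∈ I := by
    refine sub_aeval_mem_of_forall_X_sub_mem (fun j => ?_) p
    rcases eq_or_ne j 0 with rfl | hj
    · simpa using Ideal.subset_span (Set.mem_insert _ _)
    · simp [Function.update_of_ne hj]
  rw [← sub_add_cancel p (aeval (Function.update X 0 0) p)]
  refine add_mem hsub ?_
  rw [hq]
  exact Ideal.mul_mem_right _ _ (Ideal.subset_span (Set.mem_insert_of_mem _ rfl))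

/-- a polynomial vanishing on the 8-parameter family of points lies in
the ideal generated by u1 and (w12·w21 − w11·w22). -/
theorem vanishing_implies_ideal_membership
    {K : Type*} [Field K] [CharZero K] [IsAlgClosed K]
    (p : MvPolynomial (Fin 9) K)
    (hp : ∀ a1 a2 b1 b2 c11 c12 c21 c22 : K,
      MvPolynomial.eval
        (![0, -(a1 * a2), b1, -(b1 * b2), a2 * c21, -(a2 * b1 * c22),
           -(a1 * a2 * c21), a1 * a2 * b1 * c22,
           a1 * a2 * (c11 * c22 - c12 * c21)] : Fin 9 → K) p = 0) :
    p ∈ Ideal.span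
      ({X 0, X 5 * X 6 - X 4 * X 7} : Set (MvPolynomial (Fin 9) K)) :=
  vanishing_implies_ideal_membership_general p hp

end
end

section
/- On the set of positive roots Δ⁺ of gl(n), identified with pairs (i,j) with 1 ≤ i < j ≤ n, fix a sublattice Δ⁺_r (the positive roots of a block-diagonal reductive subalgebra determined by block sizes (n1,...,ns)) and define γ' ≻ γ iff γ' − γ ∈ Δ⁺_r. Let M be the set of roots in the nilradical (pairs (i,j) with i,j in different blocks). Then M has a unique base: a unique subset S ⊆ M whose elements are pairwise incomparable under ≺ and such that every γ ∈ M \ S satisfies γ ≻ ξ for some ξ ∈ S. -/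
/- Roots of gl(n) are pairs (i,j), 1 ≤ i < j ≤ n (1-based).  A block structure is
encoded by a monotone "block index" function blk : ℕ → ℕ; the positive roots of the
block-diagonal subalgebra are the (a,b), a < b, with blk a = blk b, and the nilradical
root set M consists of the (i,j), i < j, with blk i ≠ blk j. -/

/-- `IsSucc blk ξ γ` means γ ≻ ξ, i.e. γ − ξ ∈ Δ⁺_r : either the first coordinates
agree and the second coordinates differ by a root of a block, or symmetrically. -/
def IsSucc (blk : ℕ → ℕ) (ξ γ : ℕ × ℕ) : Prop :=
  (γ.1 = ξ.1 ∧ ξ.2 < γ.2 ∧ blk ξ.2 = blk γ.2) ∨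
  (γ.2 = ξ.2 ∧ γ.1 < ξ.1 ∧ blk γ.1 = blk ξ.1)

/-- the nilradical root set M. -/
def Mset (blk : ℕ → ℕ) (n : ℕ) : Set (ℕ × ℕ) :=
  {p | 1 ≤ p.1 ∧ p.1 < p.2 ∧ p.2 ≤ n ∧ blk p.1 ≠ blk p.2}

/-- `S` is a base of `M`: an antichain (pairwise incomparable set) in M such that
every element of M \ S dominates an element of S. -/
def IsBase (blk : ℕ → ℕ) (n : ℕ) (S : Set (ℕ × ℕ)) : Prop :=
  S ⊆ Mset blk n ∧
  (∀ ξ ∈ S, ∀ η ∈ S, ¬ IsSucc blk ξ η ∧ ¬ IsSucc blk η ξ) ∧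
  (∀ γ ∈ Mset blk n \ S, ∃ ξ ∈ S, IsSucc blk ξ γ)

open Classical in
noncomputable def upB (blk : ℕ → ℕ) (n x : ℕ) : ℕ :=
  Nat.findGreatest (fun y => blk y = blk x) n

open Classical in
noncomputable def dnB (blk : ℕ → ℕ) (x : ℕ) : ℕ :=
  Nat.find (p := fun y => blk y = blk x) ⟨x, rfl⟩

section lemmas
variable {blk : ℕ → ℕ} {n : ℕ}

lemma dn_le (x : ℕ) : dnB blk x ≤ x := by
  unfold dnB; exact Nat.find_min' _ rfl

lemma blk_dn (x : ℕ) : blk (dnB blk x) = blk x := by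
  unfold dnB; exact Nat.find_spec (p := fun y => blk y = blk x) ⟨x, rfl⟩

lemma dn_min {x y : ℕ} (h : y < dnB blk x) : blk y ≠ blk x := by
  unfold dnB at h; exact Nat.find_min (p := fun y => blk y = blk x) ⟨x, rfl⟩ h

lemma up_ge {x : ℕ} (hx : x ≤ n) : x ≤ upB blk n x := by
  unfold upB; exact Nat.le_findGreatest hx rfl

lemma le_up {x y : ℕ} (hy : y ≤ n) (h : blk y = blk x) : y ≤ upB blk n x := by
  unfold upB; exact Nat.le_findGreatest hy h

lemma blk_up {x : ℕ} (hx : x ≤ n) : blk (upB blk n x) = blk x := by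
  unfold upB; exact Nat.findGreatest_spec (P := fun y => blk y = blk x) hx rfl

lemma up_congr {x y : ℕ} (h : blk x = blk y) : upB blk n x = upB blk n y := by
  unfold upB; congr 1; funext z; rw [h]

lemma dn_congr {x y : ℕ} (h : blk x = blk y) : dnB blk x = dnB blk y := by
  have h1 : blk (dnB blk x) = blk y := (blk_dn x).trans h
  have h2 : blk (dnB blk y) = blk x := (blk_dn y).trans h.symm
  rcases lt_trichotomy (dnB blk x) (dnB blk y) with hl | he | hl
  · exact (dn_min hl h1).elim
  · exact he
  · exact (dn_min hl h2).elim

lemma interval (hblk : Monotone blk) {a x b : ℕ} (hax : a ≤ x) (hxb : x ≤ b)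
    (hab : blk a = blk b) : blk x = blk a :=
  le_antisymm ((hblk hxb).trans_eq hab.symm) (hblk hax)

end lemmas

/-- the candidate base : "anti-diagonal" elements of each grid. -/
def Sb (blk : ℕ → ℕ) (n : ℕ) : Set (ℕ × ℕ) :=
  {p | p ∈ Mset blk n ∧ upB blk n p.1 - p.1 = p.2 - dnB blk p.2}

section main
variable {blk : ℕ → ℕ} {n : ℕ}

/-- basic facts about a root in M. -/
lemma mfacts (hblk : Monotone blk) {p : ℕ × ℕ} (hp : p ∈ Mset blk n) :
    p.1 ≤ n ∧ blk p.1 < blk p.2 ∧ p.1 < dnB blk p.2 ∧ upB blk n p.1 < p.2 := by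
  obtain ⟨h1, h2, h3, h4⟩ := hp
  have hlt : blk p.1 < blk p.2 := lt_of_le_of_ne (hblk h2.le) h4
  have hin : p.1 ≤ n := le_trans h2.le h3
  have e1 : blk (dnB blk p.2) = blk p.2 := blk_dn p.2
  have e2 : blk (upB blk n p.1) = blk p.1 := blk_up hin
  refine ⟨hin, hlt, ?_, ?_⟩
  · exact hblk.reflect_lt (by rw [e1]; exact hlt)
  · exact hblk.reflect_lt (by rw [e2]; exact hlt)

/-- every non-diagonal element of M dominates a diagonal element, whose diagonal
index is `min r s`. -/
lemma cover (hblk : Monotone blk) {p : ℕ × ℕ} (hp : p ∈ Mset blk n)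
    (hne : upB blk n p.1 - p.1 ≠ p.2 - dnB blk p.2) :
    ∃ ζ ∈ Sb blk n, IsSucc blk ζ p ∧
      ζ.2 - dnB blk ζ.2 = min (upB blk n p.1 - p.1) (p.2 - dnB blk p.2) := by
  obtain ⟨h1, h2, h3, h4⟩ := hp
  obtain ⟨hin, hlt, hdn, hup⟩ := mfacts hblk ⟨h1, h2, h3, h4⟩
  have hiu : p.1 ≤ upB blk n p.1 := up_ge hin
  have hdj : dnB blk p.2 ≤ p.2 := dn_le p.2
  have e1 : blk (dnB blk p.2) = blk p.2 := blk_dn p.2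
  have e2 : blk (upB blk n p.1) = blk p.1 := blk_up hin
  set r := upB blk n p.1 - p.1 with hr
  set s := p.2 - dnB blk p.2 with hs
  rcases lt_or_gt_of_ne hne with hlt' | hlt'
  · -- r < s : move left in the row
    have hblk2 : blk (dnB blk p.2 + r) = blk p.2 := by
      have := interval hblk (Nat.le_add_right (dnB blk p.2) r) (by omega) e1
      rw [this, e1]
    have hdd : dnB blk (dnB blk p.2 + r) = dnB blk p.2 := dn_congr hblk2
    refine ⟨(p.1, dnB blk p.2 + r), ⟨⟨h1, by omega, by omega, by rw [hblk2]; exact hlt.ne⟩,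
      ?_⟩, Or.inl ⟨rfl, by omega, hblk2⟩, ?_⟩
    · show upB blk n p.1 - p.1 = dnB blk p.2 + r - dnB blk (dnB blk p.2 + r)
      rw [hdd]; omega
    · show dnB blk p.2 + r - dnB blk (dnB blk p.2 + r) = min r s
      rw [hdd]; omega
  · -- s < r : move down in the column
    have hblk1 : blk (upB blk n p.1 - s) = blk p.1 :=
      interval hblk (by omega) (by omega) e2.symm
    have huu : upB blk n (upB blk n p.1 - s) = upB blk n p.1 := up_congr hblk1
    have hdd : dnB blk p.2 = dnB blk p.2 := rfl
    refine ⟨(upB blk n p.1 - s, p.2), ⟨⟨by omega, by omega, h3,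
      by rw [hblk1]; exact hlt.ne⟩, ?_⟩, Or.inr ⟨rfl, by omega, hblk1.symm⟩, ?_⟩
    · show upB blk n (upB blk n p.1 - s) - (upB blk n p.1 - s) = p.2 - dnB blk p.2
      rw [huu]; omega
    · show p.2 - dnB blk p.2 = min r s
      omega

/-- no element of Sb dominates another. -/
lemma no_succ (hblk : Monotone blk) {ξ η : ℕ × ℕ} (hξ : ξ ∈ Sb blk n) (hη : η ∈ Sb blk n) :
    ¬ IsSucc blk ξ η := by
  obtain ⟨hξM, hξS⟩ := hξ
  obtain ⟨hηM, hηS⟩ := hη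
  rintro (⟨h1, h2, h3⟩ | ⟨h1, h2, h3⟩)
  · have hd : dnB blk ξ.2 = dnB blk η.2 := dn_congr h3
    have hdl : dnB blk ξ.2 ≤ ξ.2 := dn_le ξ.2
    have hu : upB blk n η.1 = upB blk n ξ.1 := by rw [h1]
    omega
  · have hu : upB blk n η.1 = upB blk n ξ.1 := up_congr h3
    have hul : ξ.1 ≤ upB blk n ξ.1 := up_ge (le_trans hξM.2.1.le hξM.2.2.1)
    have hd : dnB blk η.2 = dnB blk ξ.2 := by rw [h1]
    omega

lemma Sb_isBase (hblk : Monotone blk) : IsBase blk n (Sb blk n) := by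
  refine ⟨fun p hp => hp.1, ?_, ?_⟩
  · intro ξ hξ η hη
    exact ⟨no_succ hblk hξ hη, no_succ hblk hη hξ⟩
  · rintro γ ⟨hγM, hγS⟩
    have h : upB blk n γ.1 - γ.1 ≠ γ.2 - dnB blk γ.2 := fun h => hγS ⟨hγM, h⟩
    obtain ⟨ζ, hζ, hs, _⟩ := cover hblk hγM h
    exact ⟨ζ, hζ, hs⟩

/-- every element of Sb lies in any base T. -/
lemma Sb_subset (hblk : Monotone blk) {T : Set (ℕ × ℕ)} (hT : IsBase blk n T) :
    Sb blk n ⊆ T := by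
  obtain ⟨hTM, hTa, hTc⟩ := hT
  suffices H : ∀ k, ∀ p ∈ Sb blk n, p.2 - dnB blk p.2 = k → p ∈ T by
    intro p hp; exact H _ p hp rfl
  intro k
  induction k using Nat.strong_induction_on with
  | _ k ih =>
    intro p hp hk
    by_contra hpT
    obtain ⟨hpM, hpS⟩ := hp
    obtain ⟨ξ, hξT, hsucc⟩ := hTc p ⟨hpM, hpT⟩
    have hξM := hTM hξT
    obtain ⟨hin, hlt, hdn, hup⟩ := mfacts hblk hpM
    have hiu : p.1 ≤ upB blk n p.1 := up_ge hin
    have hdj : dnB blk p.2 ≤ p.2 := dn_le p.2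
    -- in both cases, ξ is non-diagonal with min index < k
    have key : upB blk n ξ.1 - ξ.1 ≠ ξ.2 - dnB blk ξ.2 ∧
        min (upB blk n ξ.1 - ξ.1) (ξ.2 - dnB blk ξ.2) < k := by
      rcases hsucc with ⟨h1, h2, h3⟩ | ⟨h1, h2, h3⟩
      · have hu : upB blk n ξ.1 = upB blk n p.1 := by rw [← h1]
        have hd : dnB blk ξ.2 = dnB blk p.2 := dn_congr h3
        have hdl : dnB blk ξ.2 ≤ ξ.2 := dn_le ξ.2
        rw [hu, hd, ← h1]
        omega
      · have hu : upB blk n ξ.1 = upB blk n p.1 := up_congr h3.symm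
        have hd : dnB blk ξ.2 = dnB blk p.2 := by rw [← h1]
        have hξn : ξ.1 ≤ n := le_trans hξM.2.1.le hξM.2.2.1
        have hξu : ξ.1 ≤ upB blk n p.1 := le_up hξn h3.symm
        rw [hu, hd, ← h1]
        omega
    obtain ⟨ζ, hζS, hζsucc, hζk⟩ := cover hblk hξM key.1
    have hζT : ζ ∈ T := ih (ζ.2 - dnB blk ζ.2) (by omega) ζ hζS rfl
    exact (hTa ζ hζT ξ hξT).1 hζsucc

lemma base_eq (hblk : Monotone blk) {T : Set (ℕ × ℕ)} (hT : IsBase blk n T) :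
    T = Sb blk n := by
  have hsub := Sb_subset hblk hT
  apply Set.Subset.antisymm _ hsub
  intro ξ hξT
  by_contra hξS
  have hξM := hT.1 hξT
  have hne : upB blk n ξ.1 - ξ.1 ≠ ξ.2 - dnB blk ξ.2 := fun h => hξS ⟨hξM, h⟩
  obtain ⟨ζ, hζS, hsucc, _⟩ := cover hblk hξM hne
  exact (hT.2.1 ζ (hsub hζS) ξ hξT).1 hsucc

end main

/-- for any block structure, the nilradical root set has a unique base. -/
theorem unique_base (n : ℕ) (blk : ℕ → ℕ) (hblk : Monotone blk) :
    ∃! S : Set (ℕ × ℕ), IsBase blk n S :=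
  ⟨Sb blk n, Sb_isBase hblk, fun _ hT => base_eq hblk hT⟩
end

section
/- Let K be an algebraically closed field of characteristic 0 and A = K[x_{ij}] the coordinate ring of the (2,4,2) nilradical m of gl(8,K). Let B1 ⊆ A be the K-subalgebra generated by M1, M2, N1, N2, L11, L12, L21, L22, D. If F ∈ A is an N-invariant polynomial (invariant under conjugation by all unitriangular g) such that M1·F ∈ B1, then F ∈ B1. -/
/- Statement 0: the identity L12·L21 − L11·L22 = M1·N1·D in the coordinate ring of the
(2,4,2) nilradical of gl(8,K).  Variables are indexed 0-based: x_{ij} (1-based) is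
`X (i-1, j-1)`.  The ambient polynomial ring contains all pairs, but only nilradical
variables occur in the polynomials and in the generic matrix `Xgen`. -/

noncomputable section

open MvPolynomial

variable (K : Type*) [Field K] [CharZero K]

/-- membership in the (2,4,2) nilradical. -/
def InNil242 (Y : Matrix (Fin 8) (Fin 8) K) : Prop :=
  ∀ i j : Fin 8, ¬ NilPos242 i j → Y i j = 0

/-- upper unitriangular matrices. -/
def IsUnitriangular (g : Matrix (Fin 8) (Fin 8) K) : Prop :=
  (∀ i, g i i = 1) ∧ ∀ i j : Fin 8, j < i → g i j = 0

/-- evaluation of a polynomial of `A8 K` at a matrix. -/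
def evalAt (Y : Matrix (Fin 8) (Fin 8) K) : A8 K →+* K :=
  (MvPolynomial.eval fun p : Fin 8 × Fin 8 => Y p.1 p.2)

/-- a polynomial is N-invariant if its value is unchanged under conjugation of the
argument by any unitriangular matrix. -/
def IsNInvariant (f : A8 K) : Prop :=
  ∀ g Y : Matrix (Fin 8) (Fin 8) K, IsUnitriangular K g → InNil242 K Y →
    evalAt K (g⁻¹ * Y * g) f = evalAt K Y f

/-- the subalgebra B1 generated by M1, M2, N1, N2, L11, L12, L21, L22 and D. -/
def B1 : Subalgebra K (A8 K) :=
  Algebra.adjoin K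
    {pM1 K, pM2 K, pN1 K, pN2 K, pL11 K, pL12 K, pL21 K, pL22 K, pD K}

end

/-!
Write `B1 = K[M1, S]` with `S = {M2, N1, N2, L11, L12, L21, L22, D}`; every element of `B1` is
`x + M1 * c` with `x ∈ K[S]` and `c ∈ B1`, and `x` is the image of a polynomial `P(W)` over
`K[z₀, …, z₆]` under `zᵢ ↦ (M2, N1, N2, L11, L12, L21, D)ᵢ`, `W ↦ L22`. Evaluating at a point of
the nilradical over `K(z₀, …, z₆)` where `M1` vanishes and these seven invariants become the
indeterminates sends `L22` to `z₄z₅/z₃` (by `L12 L21 − L11 L22 = M1 N1 D`). So if `M1 * F ∈ B1`,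
then `P(z₄z₅/z₃) = 0`, hence `z₃W − z₄z₅ ∣ P` since `z₃` is prime and does not divide `z₄z₅`.
That relation maps to `L11 L22 − L12 L21 = −M1 N1 D`, so `x ∈ M1 * B1` and `F ∈ B1` after
cancelling `M1`.
-/

namespace Polynomial

variable {R S : Type*} [CommRing R] [IsDomain R] [CommRing S] {a b : R}

theorem C_mul_X_sub_C_dvd_of_dvd_C_mul (hb : Prime b) (hab : ¬ b ∣ a) {P : R[X]}
    (h : C b * X - C a ∣ C b * P) : C b * X - C a ∣ P := by
  obtain ⟨Q, hQ⟩ := h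
  have hCb : Prime (C b) := prime_C_iff.mpr hb
  rcases hCb.dvd_or_dvd ⟨P, hQ.symm⟩ with hq | ⟨Q', rfl⟩
  · have hCa : C b ∣ C a := by simpa using dvd_sub (dvd_mul_right (C b) X) hq
    exact absurd (by simpa using (C_dvd_iff_dvd_coeff b (C a)).mp hCa 0) hab
  · exact ⟨Q', mul_left_cancel₀ hCb.ne_zero (by rw [hQ]; ring)⟩

theorem C_mul_X_sub_C_dvd_of_eval₂_eq_zero (hb : Prime b) (hab : ¬ b ∣ a) {f : R →+* S}
    (hf : Function.Injective f) {t : S} (ht : f b * t = f a) {P : R[X]}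
    (hP : P.eval₂ f t = 0) : C b * X - C a ∣ P := by
  induction hn : P.natDegree using Nat.strong_induction_on generalizing P with
  | _ n ih =>
  rcases n with _ | n
  · rw [eq_C_of_natDegree_eq_zero hn, eval₂_C, ← map_zero f] at hP
    rw [eq_C_of_natDegree_eq_zero hn, hf hP, C_0]
    exact dvd_zero _
  · set P' := C a * P.divX + C (b * P.coeff 0)
    have hsplit : C b * P = (C b * X - C a) * P.divX + P' := by
      conv_lhs => rw [← P.divX_mul_X_add]
      simp only [P', C_mul]
      ring
    have hP' : P'.eval₂ f t = 0 := by
      have h := congrArg (eval₂ f t) hsplit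
      simp only [eval₂_mul, eval₂_sub, eval₂_add, eval₂_C, eval₂_X, hP, ht] at h
      simpa using h.symm
    have hdeg : P'.natDegree < n + 1 := by
      have := natDegree_C_mul_le a P.divX
      rw [natDegree_divX_eq_natDegree_tsub_one, hn] at this
      simp only [P', natDegree_add_C]
      omega
    refine C_mul_X_sub_C_dvd_of_dvd_C_mul hb hab ?_
    rw [hsplit]
    exact dvd_add (dvd_mul_right _ _) (ih _ hdeg hP' rfl)

end Polynomial

theorem Algebra.exists_eq_add_mul_of_mem_adjoin_insert {R A : Type*} [CommSemiring R]
    [CommSemiring A] [Algebra R A] {m b : A} {s : Set A} (hb : b ∈ adjoin R (insert m s)) :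
    ∃ x ∈ adjoin R s, ∃ c ∈ adjoin R (insert m s), b = x + m * c := by
  induction hb using Algebra.adjoin_induction with
  | mem y hy =>
    rcases hy with rfl | hy
    · exact ⟨0, zero_mem _, 1, one_mem _, by simp⟩
    · exact ⟨y, subset_adjoin hy, 0, zero_mem _, by simp⟩
  | algebraMap r => exact ⟨algebraMap R A r, algebraMap_mem _ r, 0, zero_mem _, by simp⟩
  | add y y' _ _ ih ih' =>
    obtain ⟨x, hx, c, hc, rfl⟩ := ih
    obtain ⟨x', hx', c', hc', rfl⟩ := ih'
    exact ⟨x + x', add_mem hx hx', c + c', add_mem hc hc', by ring⟩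
  | mul y y' _ _ ih ih' =>
    obtain ⟨x, hx, c, hc, rfl⟩ := ih
    obtain ⟨x', hx', c', hc', rfl⟩ := ih'
    have hm : m ∈ adjoin R (insert m s) := subset_adjoin (Set.mem_insert m s)
    have hxs : adjoin R s ≤ adjoin R (insert m s) := adjoin_mono (Set.subset_insert m s)
    refine ⟨x * x', mul_mem hx hx', x * c' + c * x' + m * c * c', ?_, by ring⟩
    exact add_mem (add_mem (mul_mem (hxs hx) hc') (mul_mem hc (hxs hx')))
      (mul_mem (mul_mem hm hc) hc')

noncomputable section

namespace Nil242

open MvPolynomial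

variable (K : Type*) [Field K]

local notation "R₇" => MvPolynomial (Fin 7) K
local notation "T₇" => FractionRing R₇

lemma pD_eq : pD K =
    (X (0,2) * X (2,6) + X (0,3) * X (3,6) + X (0,4) * X (4,6) + X (0,5) * X (5,6)) *
      (X (1,2) * X (2,7) + X (1,3) * X (3,7) + X (1,4) * X (4,7) + X (1,5) * X (5,7)) -
    (X (0,2) * X (2,7) + X (0,3) * X (3,7) + X (0,4) * X (4,7) + X (0,5) * X (5,7)) *
      (X (1,2) * X (2,6) + X (1,3) * X (3,6) + X (1,4) * X (4,6) + X (1,5) * X (5,6)) := by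
  simp [pD, Xgen, Matrix.mul_apply, Fin.sum_univ_eight, NilPos242]

lemma pL12_mul_pL21_sub_pL11_mul_pL22 :
    pL12 K * pL21 K - pL11 K * pL22 K = pM1 K * pN1 K * pD K := by
  rw [pD_eq, pL12, pL21, pL11, pL22, pM1, pN1]
  ring

def z (i : Fin 7) : T₇ := algebraMap R₇ T₇ (X i)

/-- Its entries solve `M1 = 0` and `(M2, N1, N2, L11, L12, L21, D) = (z 0, …, z 6)`. -/
def sectionPoint : Matrix (Fin 8) (Fin 8) T₇ :=
  !![0, 0, z K 4 / z K 3, 0, 0, -(z K 6 / z K 5), 0, 0;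
     0, 0, 0, z K 0 * z K 3 / z K 4, z K 3, 0, 0, 0;
     0, 0, 0, 0, 0, 0, 0, 0;
     0, 0, 0, 0, 0, 0, 0, (z K 2 * z K 3 - z K 5) * z K 4 / (z K 0 * z K 1 * z K 3);
     0, 0, 0, 0, 0, 0, 1, 0;
     0, 0, 0, 0, 0, 0, z K 1, z K 2;
     0, 0, 0, 0, 0, 0, 0, 0;
     0, 0, 0, 0, 0, 0, 0, 0]

def evalSection : A8 K →ₐ[K] T₇ := aeval fun p => sectionPoint K p.1 p.2

def gen : Fin 7 → A8 K := ![pM2 K, pN1 K, pN2 K, pL11 K, pL12 K, pL21 K, pD K]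

lemma evalSection_pM1 : evalSection K (pM1 K) = 0 := by
  simp [evalSection, sectionPoint, pM1]

lemma evalSection_gen (i : Fin 7) : evalSection K (gen K i) = z K i := by
  have hz (i : Fin 7) : z K i ≠ 0 := IsFractionRing.to_map_eq_zero_iff.not.mpr (X_ne_zero i)
  have h0 := hz 0; have h1 := hz 1; have h3 := hz 3; have h4 := hz 4; have h5 := hz 5
  fin_cases i <;>
    simp only [gen, pM2, pN1, pN2, pL11, pL12, pL21, pD_eq, map_add, map_sub, map_mul,
      evalSection, aeval_X, sectionPoint, Matrix.of_apply, Matrix.cons_val', Matrix.cons_val,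
      Matrix.cons_val_zero, Matrix.cons_val_one, Matrix.cons_val_fin_one, Fin.isValue, Fin.zero_eta,
      Fin.mk_one, Fin.reduceFinMk] <;>
    field_simp <;> ring

lemma evalSection_pL11_mul_pL22 : evalSection K (pL11 K) * evalSection K (pL22 K) =
    evalSection K (pL12 K) * evalSection K (pL21 K) := by
  have h := congrArg (evalSection K) (pL12_mul_pL21_sub_pL11_mul_pL22 K)
  rw [map_sub, map_mul, map_mul, map_mul, map_mul, evalSection_pM1] at h
  linear_combination -h

lemma evalSection_aeval_gen (r : R₇) : evalSection K (aeval (gen K) r) = algebraMap R₇ T₇ r := by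
  have h : (evalSection K).comp (aeval (gen K)) = IsScalarTower.toAlgHom K R₇ T₇ :=
    algHom_ext fun i => by simpa [z] using evalSection_gen K i
  exact DFunLike.congr_fun h r

def b1Poly : Polynomial R₇ →ₐ[K] A8 K :=
  Polynomial.eval₂AlgHom (aeval (gen K)) (pL22 K) fun _ => Commute.all _ _

def b1Relation : Polynomial R₇ := Polynomial.C (X 3) * Polynomial.X - Polynomial.C (X 4 * X 5)

lemma b1Poly_b1Relation : b1Poly K (b1Relation K) = -(pM1 K * pN1 K * pD K) := by
  rw [← pL12_mul_pL21_sub_pL11_mul_pL22]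
  simp [b1Poly, b1Relation, gen]

lemma exists_b1Poly_eq {x : A8 K}
    (hx : x ∈ Algebra.adjoin K {pM2 K, pN1 K, pN2 K, pL11 K, pL12 K, pL21 K, pL22 K, pD K}) :
    ∃ P, b1Poly K P = x := by
  refine Algebra.adjoin_le (S := (b1Poly K).range) ?_ hx
  simp only [Set.insert_subset_iff, Set.singleton_subset_iff, SetLike.mem_coe, AlgHom.mem_range]
  refine ⟨⟨Polynomial.C (X 0), ?_⟩, ⟨Polynomial.C (X 1), ?_⟩, ⟨Polynomial.C (X 2), ?_⟩,
    ⟨Polynomial.C (X 3), ?_⟩, ⟨Polynomial.C (X 4), ?_⟩, ⟨Polynomial.C (X 5), ?_⟩,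
    ⟨Polynomial.X, ?_⟩, ⟨Polynomial.C (X 6), ?_⟩⟩ <;> simp [b1Poly, gen]

lemma b1Poly_mem (P : Polynomial R₇) : b1Poly K P ∈ B1 K := by
  have hgen : Set.range (gen K) ⊆
      {pM1 K, pM2 K, pN1 K, pN2 K, pL11 K, pL12 K, pL21 K, pL22 K, pD K} := by
    rintro _ ⟨i, rfl⟩
    fin_cases i <;> simp [gen]
  have hL22 : pL22 K ∈ B1 K := Algebra.subset_adjoin (by simp)
  induction P using Polynomial.induction_on with
  | C r =>
    have : aeval (gen K) r ∈ B1 K := Algebra.adjoin_mono hgen <| by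
      rw [Algebra.adjoin_range_eq_range_aeval]; exact ⟨r, rfl⟩
    simpa [b1Poly] using this
  | add P Q hP hQ => simpa using add_mem hP hQ
  | monomial n r h =>
    rw [pow_succ, ← mul_assoc, map_mul]
    exact mul_mem h (by simpa [b1Poly] using hL22)

lemma evalSection_b1Poly (P : Polynomial R₇) :
    evalSection K (b1Poly K P) = P.eval₂ (algebraMap R₇ T₇) (evalSection K (pL22 K)) := by
  have hcomp : (evalSection K).toRingHom.comp (aeval (R := K) (gen K)).toRingHom =
      algebraMap R₇ T₇ :=
    RingHom.ext (evalSection_aeval_gen K)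
  have h := Polynomial.hom_eval₂ P (aeval (R := K) (gen K)).toRingHom (evalSection K).toRingHom
    (pL22 K)
  rw [hcomp] at h
  exact h

lemma b1Relation_dvd_of_evalSection_b1Poly_eq_zero {P : Polynomial R₇}
    (hP : evalSection K (b1Poly K P) = 0) : b1Relation K ∣ P := by
  have hX3 : Prime (X 3 : R₇) := X_prime
  have hX45 : ¬ (X 3 : R₇) ∣ X 4 * X 5 := by
    intro h
    rcases hX3.dvd_or_dvd h with h | h <;> simp at h
  refine Polynomial.C_mul_X_sub_C_dvd_of_eval₂_eq_zero hX3 hX45 (IsFractionRing.injective R₇ T₇)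
    (t := evalSection K (pL22 K)) ?_ ?_
  · have h3 : evalSection K (pL11 K) = z K 3 := evalSection_gen K 3
    have h4 : evalSection K (pL12 K) = z K 4 := evalSection_gen K 4
    have h5 : evalSection K (pL21 K) = z K 5 := evalSection_gen K 5
    simpa [h3, h4, h5, z] using evalSection_pL11_mul_pL22 K
  · rwa [evalSection_b1Poly] at hP

end Nil242

end

variable (K : Type*) [Field K] [CharZero K]

theorem M1_saturation (F : A8 K)
    (hMF : pM1 K * F ∈ B1 K) : F ∈ B1 K := by
  obtain ⟨x, hx, c, hc, hMF_eq⟩ := Algebra.exists_eq_add_mul_of_mem_adjoin_insert hMF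
  obtain ⟨P, rfl⟩ := Nil242.exists_b1Poly_eq K hx
  obtain ⟨Q, rfl⟩ : Nil242.b1Relation K ∣ P := by
    refine Nil242.b1Relation_dvd_of_evalSection_b1Poly_eq_zero K ?_
    simpa [Nil242.evalSection_pM1] using congrArg (Nil242.evalSection K) hMF_eq.symm
  have hF : F = c - pN1 K * pD K * Nil242.b1Poly K Q := by
    have hM1 : pM1 K ≠ 0 := MvPolynomial.X_ne_zero _
    refine mul_left_cancel₀ hM1 ?_
    rw [hMF_eq, map_mul, Nil242.b1Poly_b1Relation]
    ring
  have hN1 : pN1 K ∈ B1 K := Algebra.subset_adjoin (by simp)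
  have hD : pD K ∈ B1 K := Algebra.subset_adjoin (by simp)
  rw [hF]
  exact sub_mem hc (mul_mem (mul_mem hN1 hD) (Nil242.b1Poly_mem K Q))
end
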